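/- For every odd d = 2m+1 ≥ 1 and every l ∈ [0,1], the (d-1)-dimensional volume of D_d(l), the projection onto {x_d = 0} of {(x_1,...,x_d) : 1 ≥ x_1 ≥ ... ≥ x_d ≥ 0, Σ_{j=1}^d (-1)^{j-1} x_j = l}, equals (1/d!)·(1/B(m+1,m+1))·l^m(1-l)^m, where B(m+1,m+1) = (m!)^2/(2m+1)!. -/

import Mathlib

/-!
A point `1 ≥ x₁ ≥ ⋯ ≥ x_d ≥ 0` of the polytope, `d = 2m + 1`, is determined by its projection
`y = (x₁, …, x_{2m})`, since `x_d = l - ∑_{j ≤ 2m} (-1)^(j-1) y_j`. Its gaps `g_j = x_j - x_{j+1}`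
(`j ≤ 2m`) are the gaps of `y - x_d 𝟙` followed by `0`, so `y ↦ g` is affine with linear part the
product of the unipotent maps `y ↦ y + (∑ (-1)^(j-1) y_j) 𝟙` (nilpotent part of square zero, as the
alternating sum of `𝟙` vanishes in even length) and `z ↦ z - shift z`; it preserves volume. In the
gaps the constraints decouple: all `g_j ≥ 0`, the odd-indexed gaps sum to `l - x_d ≤ l`, and the
even-indexed ones to `x₁ - l ≤ 1 - l`. Hence `D_d(l)` has the volume of a product of two
`m`-simplices, `(l^m / m!) ((1 - l)^m / m!)`.
-/

open MeasureTheory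

/-- `Dset d l` is the orthogonal projection onto the hyperplane `x_d = 0`
(i.e. onto the first `d - 1` coordinates) of the polytope
`{x ∈ ℝ^d : 1 ≥ x₁ ≥ x₂ ≥ … ≥ x_d ≥ 0, ∑ (-1)^(j-1) x_j = l}`. -/
def Dset (d : ℕ) (l : ℝ) : Set (Fin (d - 1) → ℝ) :=
  {y | ∃ x : Fin d → ℝ, Antitone x ∧ (∀ j, 0 ≤ x j ∧ x j ≤ 1) ∧
    (∑ j : Fin d, (-1 : ℝ) ^ (j : ℕ) * x j) = l ∧
    ∀ i : Fin (d - 1), y i = x (Fin.castLE (Nat.sub_le d 1) i)}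

theorem LinearMap.det_one_sub_of_isNilpotent {R M : Type*} [CommRing R] [IsDomain R]
    [AddCommGroup M] [Module R M] [Module.Free R M] [Module.Finite R M]
    {N : Module.End R M} (hN : IsNilpotent N) : LinearMap.det (1 - N) = 1 := by
  simpa [hN.charpoly_eq_X_pow_finrank] using (N.eval_charpoly 1).symm

theorem LinearMap.isNilpotent_smulRight {R M : Type*} [CommRing R] [AddCommGroup M] [Module R M]
    {f : M →ₗ[R] R} {v : M} (hv : f v = 0) : IsNilpotent (f.smulRight v) :=
  ⟨2, by ext x; simp [pow_two, hv]⟩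

theorem volume_preimage_one_sub_of_isNilpotent {ι : Type*} [Fintype ι]
    {N : Module.End ℝ (ι → ℝ)} (hN : IsNilpotent N) (s : Set (ι → ℝ)) :
    volume (⇑(1 - N) ⁻¹' s) = volume s := by
  rw [Measure.addHaar_preimage_linearMap _ (by simp [LinearMap.det_one_sub_of_isNilpotent hN]),
    LinearMap.det_one_sub_of_isNilpotent hN]
  simp

section Sequences

variable {R : Type*} [CommRing R]

def shiftLeft (n : ℕ) : Module.End R (Fin n → R) where
  toFun y i := if h : (i : ℕ) + 1 < n then y ⟨i + 1, h⟩ else 0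
  map_add' y z := by ext i; dsimp only [Pi.add_apply]; split_ifs <;> simp
  map_smul' c y := by ext i; dsimp only [Pi.smul_apply, RingHom.id_apply]; split_ifs <;> simp

theorem shiftLeft_apply {n : ℕ} (y : Fin n → R) (i : Fin n) :
    shiftLeft n y i = if h : (i : ℕ) + 1 < n then y ⟨i + 1, h⟩ else 0 := rfl

theorem shiftLeft_pow_apply {n : ℕ} (k : ℕ) (y : Fin n → R) (i : Fin n) :
    (shiftLeft n ^ k) y i = if h : (i : ℕ) + k < n then y ⟨i + k, h⟩ else 0 := by
  induction k generalizing y with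
  | zero => simp
  | succ k ih =>
    rw [pow_succ, Module.End.mul_apply, ih]
    simp only [shiftLeft_apply, ← add_assoc]
    split_ifs <;> first | rfl | omega

theorem isNilpotent_shiftLeft (n : ℕ) : IsNilpotent (shiftLeft (R := R) n) :=
  ⟨n, by ext y i; simp [shiftLeft_pow_apply]⟩

def gaps {n : ℕ} (x : Fin (n + 1) → R) : Fin n → R := fun i => x i.castSucc - x i.succ

theorem one_sub_shiftLeft_apply_sub_const {n : ℕ} (y : Fin n → R) (t : R) :
    (1 - shiftLeft n : Module.End R (Fin n → R)) (y - fun _ => t) = gaps (Fin.snoc y t) := by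
  ext i
  simp only [LinearMap.sub_apply, Module.End.one_apply, shiftLeft_apply, gaps, Pi.sub_apply,
    Fin.snoc_castSucc]
  split_ifs with h
  · rw [show i.succ = Fin.castSucc ⟨i + 1, h⟩ from rfl, Fin.snoc_castSucc]; ring
  · rw [show i.succ = Fin.last n from Fin.ext (by simp; omega), Fin.snoc_last]; ring

theorem antitone_iff_gaps_nonneg {n : ℕ} [LinearOrder R] [IsOrderedRing R]
    (x : Fin (n + 1) → R) : Antitone x ↔ ∀ i, 0 ≤ gaps x i := by
  simp [Fin.antitone_iff_succ_le, gaps]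

theorem sum_gaps {n : ℕ} (x : Fin (n + 1) → R) : ∑ i, gaps x i = x 0 - x (Fin.last n) := by
  induction n with
  | zero => simp [gaps]
  | succ n ih =>
    have := ih (Fin.init x)
    simp only [gaps, Fin.init] at this
    simp only [gaps, Fin.sum_univ_castSucc, Fin.succ_castSucc, this, Fin.succ_last, Fin.castSucc_zero]
    abel

def altSum (n : ℕ) : (Fin n → R) →ₗ[R] R where
  toFun x := ∑ j : Fin n, (-1) ^ (j : ℕ) * x j
  map_add' x y := by simp [mul_add, Finset.sum_add_distrib]
  map_smul' c x := by simp [Finset.mul_sum]; ring_nf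

theorem altSum_apply {n : ℕ} (x : Fin n → R) :
    altSum n x = ∑ j : Fin n, (-1) ^ (j : ℕ) * x j := rfl

theorem altSum_snoc {n : ℕ} (y : Fin n → R) (t : R) :
    altSum (n + 1) (Fin.snoc y t) = altSum n y + (-1) ^ n * t := by
  simp [altSum_apply, Fin.sum_univ_castSucc]

def interleave (m : ℕ) : Fin m ⊕ Fin m ≃ Fin (2 * m) where
  toFun := Sum.elim (fun j => ⟨2 * j, by omega⟩) (fun j => ⟨2 * j + 1, by omega⟩)
  invFun i := if (i : ℕ) % 2 = 0 then .inl ⟨i / 2, by omega⟩ else .inr ⟨i / 2, by omega⟩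
  left_inv := by rintro (j | j) <;> simp [Fin.ext_iff]; omega
  right_inv i := by by_cases h : (i : ℕ) % 2 = 0 <;> simp [h, Fin.ext_iff] <;> omega

@[simp]
theorem interleave_inl_val {m : ℕ} (j : Fin m) : (interleave m (.inl j) : ℕ) = 2 * j := rfl

@[simp]
theorem interleave_inr_val {m : ℕ} (j : Fin m) : (interleave m (.inr j) : ℕ) = 2 * j + 1 := rfl

theorem sum_interleave {M : Type*} [AddCommMonoid M] {m : ℕ} (f : Fin (2 * m) → M) :
    ∑ i, f i = ∑ j, f (interleave m (.inl j)) + ∑ j, f (interleave m (.inr j)) := by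
  rw [← (interleave m).sum_comp, Fintype.sum_sum_type]

theorem altSum_two_mul {m : ℕ} (y : Fin (2 * m) → R) :
    altSum (2 * m) y = ∑ j, (y (interleave m (.inl j)) - y (interleave m (.inr j))) := by
  rw [altSum_apply, sum_interleave, Finset.sum_sub_distrib]
  simp [pow_succ, pow_mul, sub_eq_add_neg]

theorem altSum_two_mul_const {m : ℕ} (c : R) : altSum (2 * m) (fun _ => c) = 0 := by
  simp [altSum_two_mul]

theorem sum_gaps_interleave_inl {m : ℕ} (x : Fin (2 * m + 1) → R) :
    ∑ j, gaps x (interleave m (.inl j)) = altSum (2 * m) (Fin.init x) := by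
  rw [altSum_two_mul]
  rfl

end Sequences

def simplex (n : ℕ) (c : ℝ) : Set (Fin n → ℝ) := {u | (∀ i, 0 ≤ u i) ∧ ∑ i, u i ≤ c}

theorem simplex_eq_empty {n : ℕ} {c : ℝ} (hc : c < 0) : simplex n c = ∅ :=
  Set.eq_empty_of_forall_notMem fun _ ⟨hu, hs⟩ =>
    hc.not_ge (le_trans (Finset.sum_nonneg fun i _ => hu i) hs)

theorem simplex_succ (n : ℕ) (c : ℝ) :
    simplex (n + 1) c = MeasurableEquiv.piFinSuccAbove (fun _ => ℝ) 0 ⁻¹'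
      {p : ℝ × (Fin n → ℝ) | 0 ≤ p.1 ∧ p.2 ∈ simplex n (c - p.1)} := by
  ext u
  change _ ↔ 0 ≤ u 0 ∧ (∀ i : Fin n, 0 ≤ u i.succ) ∧ ∑ i : Fin n, u i.succ ≤ c - u 0
  simp only [simplex, Set.mem_ofPred_eq, Fin.forall_fin_succ, Fin.sum_univ_succ,
    le_sub_iff_add_le', and_assoc]

theorem volume_simplex (n : ℕ) {c : ℝ} (hc : 0 ≤ c) :
    volume (simplex n c) = ENNReal.ofReal (c ^ n / n.factorial) := by
  induction n generalizing c with
  | zero =>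
    rw [show simplex 0 c = Set.univ.pi fun _ => Set.univ by ext; simp [simplex, hc], volume_pi_pi]
    simp
  | succ n ih =>
    set T := {p : ℝ × (Fin n → ℝ) | 0 ≤ p.1 ∧ p.2 ∈ simplex n (c - p.1)}
    have hT : MeasurableSet T := by simp only [T, simplex]; measurability
    have fiber (a : ℝ) : volume (Prod.mk a ⁻¹' T) =
        (Set.Icc 0 c).indicator (fun a => ENNReal.ofReal ((c - a) ^ n / n.factorial)) a := by
      by_cases ha : a ∈ Set.Icc 0 c
      · simp [T, Set.indicator_of_mem ha, ha.1, ← ih (sub_nonneg.2 ha.2)]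
      · rw [Set.indicator_of_notMem ha]
        rcases not_and_or.1 ha with ha | ha
        · simp [T, ha]
        · simp [T, simplex_eq_empty (sub_neg.2 (not_le.1 ha))]
    have hint : ∫ a in (0)..c, (c - a) ^ n / n.factorial = c ^ (n + 1) / (n + 1).factorial := by
      rw [intervalIntegral.integral_div, intervalIntegral.integral_comp_sub_left (· ^ n), sub_self,
        sub_zero, integral_pow, zero_pow n.succ_ne_zero, sub_zero, Nat.factorial_succ]
      push_cast
      field_simp
    rw [simplex_succ, (volume_preserving_piFinSuccAbove (fun _ => ℝ) 0).measure_preimage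
      hT.nullMeasurableSet, Measure.volume_eq_prod, Measure.prod_apply hT]
    simp only [fiber]
    rw [lintegral_indicator measurableSet_Icc, ← hint, intervalIntegral.integral_of_le hc,
      ← integral_Icc_eq_integral_Ioc, ofReal_integral_eq_lintegral_ofReal]
    · exact Continuous.integrableOn_Icc (by fun_prop)
    · filter_upwards [ae_restrict_mem measurableSet_Icc] with a ha
      have := sub_nonneg.2 ha.2
      positivity

def deinterleave (m : ℕ) : (Fin (2 * m) → ℝ) ≃ᵐ (Fin m → ℝ) × (Fin m → ℝ) :=
  (MeasurableEquiv.piCongrLeft (fun _ => ℝ) (interleave m)).symm.trans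
    (MeasurableEquiv.sumPiEquivProdPi fun _ => ℝ)

theorem deinterleave_apply {m : ℕ} (g : Fin (2 * m) → ℝ) :
    deinterleave m g = (fun j => g (interleave m (.inl j)), fun j => g (interleave m (.inr j))) :=
  rfl

theorem measurePreserving_deinterleave (m : ℕ) : MeasurePreserving (deinterleave m) :=
  ((volume_measurePreserving_piCongrLeft _ _).symm _).trans
    (volume_measurePreserving_sumPiEquivProdPi _)

theorem mem_Dset_iff {n : ℕ} {l : ℝ} (y : Fin n → ℝ) :
    y ∈ Dset (n + 1) l ↔ ∃ t, altSum (n + 1) (Fin.snoc y t : Fin (n + 1) → ℝ) = l ∧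
      Antitone (Fin.snoc y t : Fin (n + 1) → ℝ) ∧ 0 ≤ t ∧ (Fin.snoc y t : Fin (n + 1) → ℝ) 0 ≤ 1 := by
  constructor
  · rintro ⟨x, hx, hbox, hsum, hy⟩
    have hxy : Fin.snoc y (x (Fin.last n)) = x := by
      conv_rhs => rw [← Fin.snoc_init_self x]
      congr 1
      funext i
      exact hy i
    refine ⟨x (Fin.last n), ?_⟩
    rw [hxy]
    exact ⟨hsum, hx, (hbox _).1, (hbox 0).2⟩
  · rintro ⟨t, hsum, hx, ht, h0⟩
    refine ⟨Fin.snoc y t, hx, fun j => ⟨?_, (hx (Fin.zero_le j)).trans h0⟩, hsum,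
      fun i => (Fin.snoc_castSucc (α := fun _ => ℝ) t y i).symm⟩
    exact ht.trans ((Fin.snoc_last (α := fun _ => ℝ) t y).symm.trans_le (hx (Fin.le_last j)))

theorem mem_Dset_two_mul_add_one_iff {m : ℕ} {l : ℝ} (y : Fin (2 * m) → ℝ) :
    y ∈ Dset (2 * m + 1) l ↔ deinterleave m (gaps (Fin.snoc y (l - altSum (2 * m) y)))
      ∈ simplex m l ×ˢ simplex m (1 - l) := by
  set x : Fin (2 * m + 1) → ℝ := Fin.snoc y (l - altSum (2 * m) y)
  have hsnoc (t : ℝ) : altSum (2 * m + 1) (Fin.snoc y t : Fin (2 * m + 1) → ℝ) = l ↔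
      t = l - altSum (2 * m) y := by
    rw [altSum_snoc, pow_mul, neg_one_sq, one_pow, one_mul, eq_sub_iff_add_eq']
  have heven : ∑ j, gaps x (interleave m (.inl j)) = altSum (2 * m) y := by
    rw [sum_gaps_interleave_inl, Fin.init_snoc]
  have hodd : ∑ j, gaps x (interleave m (.inr j)) = x 0 - l := by
    have := sum_gaps x
    rw [sum_interleave, heven] at this
    simp only [x, Fin.snoc_last] at this ⊢
    linarith
  simp only [mem_Dset_iff, hsnoc, exists_eq_left, deinterleave_apply, Set.mem_prod, simplex,
    Set.mem_ofPred_eq, heven, hodd, antitone_iff_gaps_nonneg, ← (interleave m).forall_congr_right,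
    Sum.forall, sub_nonneg, sub_le_sub_iff_right]
  tauto

theorem stmt_6 (m : ℕ) (l : ℝ) (hl : l ∈ Set.Icc (0:ℝ) 1) :
    volume (Dset (2 * m + 1) l) =
      ENNReal.ofReal
        ((1 / ((2 * m + 1).factorial : ℝ)) *
          (((2 * m + 1).factorial : ℝ) / (m.factorial * m.factorial)) *
          l ^ m * (1 - l) ^ m) := by
  set N : Module.End ℝ (Fin (2 * m) → ℝ) := -(altSum (2 * m)).smulRight fun _ => 1
  have hN : IsNilpotent N := (LinearMap.isNilpotent_smulRight (altSum_two_mul_const 1)).neg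
  have hD : Dset (2 * m + 1) l = ⇑(1 - N) ⁻¹' ((· + fun _ => -l) ⁻¹'
      (⇑(1 - shiftLeft (2 * m) : Module.End ℝ (Fin (2 * m) → ℝ)) ⁻¹'
        (deinterleave m ⁻¹' simplex m l ×ˢ simplex m (1 - l)))) := by
    ext (y : Fin (2 * m) → ℝ)
    have hy : (1 - N) y + (fun _ => -l) = y - fun _ => l - altSum (2 * m) y := by
      ext i
      simp only [N, sub_neg_eq_add, LinearMap.add_apply, Module.End.one_apply,
        LinearMap.smulRight_apply, Pi.add_apply, Pi.sub_apply, Pi.smul_apply, smul_eq_mul, mul_one]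
      ring
    simp only [Set.mem_preimage]
    rw [hy, one_sub_shiftLeft_apply_sub_const]
    exact mem_Dset_two_mul_add_one_iff y
  rw [hD, volume_preimage_one_sub_of_isNilpotent hN, measure_preimage_add_right,
    volume_preimage_one_sub_of_isNilpotent (isNilpotent_shiftLeft _),
    (measurePreserving_deinterleave m).measure_preimage_equiv, Measure.volume_eq_prod,
    Measure.prod_prod, volume_simplex m hl.1, volume_simplex m (sub_nonneg.2 hl.2),
    ← ENNReal.ofReal_mul (by have := hl.1; positivity)]
  congr 1
  field_simp
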